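/- Let G be a Class 2 simple graph with maximum degree Δ and let F = F_φ(r, s₁:s_p) be a multifan with respect to a critical edge e = rs₁ and a coloring φ ∈ C^Δ(G−e). Then V(F) = {r, s₁, …, s_p} is φ-elementary, i.e., φ̄(u) ∩ φ̄(v) = ∅ for every two distinct vertices u, v ∈ V(F). -/

import Mathlib

/-- `c` is a proper edge coloring of `G` using colors in `{1, …, k}`:
every edge gets a color in `[1,k]`, and distinct edges sharing an endpoint
get distinct colors. -/
def IsEdgeColoring {V : Type*} (G : SimpleGraph V) (k : ℕ) (c : Sym2 V → ℕ) : Prop :=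
  (∀ e ∈ G.edgeSet, 1 ≤ c e ∧ c e ≤ k) ∧
    ∀ e ∈ G.edgeSet, ∀ f ∈ G.edgeSet, e ≠ f → (∃ v, v ∈ e ∧ v ∈ f) → c e ≠ c f

/-- The chromatic index `χ'(G)`: the least `k` admitting a proper edge `k`-coloring. -/
noncomputable def chromIndex {V : Type*} (G : SimpleGraph V) : ℕ :=
  sInf {k | ∃ c, IsEdgeColoring G k c}

/-- An edge `e` of `G` is critical if `χ'(G-e) < χ'(G)`. -/
def IsCriticalEdge {V : Type*} (G : SimpleGraph V) (e : Sym2 V) : Prop :=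
  e ∈ G.edgeSet ∧ chromIndex (G.deleteEdges {e}) < chromIndex G

/-- The set of colors of `[1,k]` missing at `v` under the coloring `c` of `G`. -/
def missingColors {V : Type*} (G : SimpleGraph V) (k : ℕ) (c : Sym2 V → ℕ) (v : V) : Set ℕ :=
  {α | 1 ≤ α ∧ α ≤ k ∧ ∀ e ∈ G.edgeSet, v ∈ e → c e ≠ α}

/-- `G` is `Δ`-critical: `Δ` is the maximum degree of `G`, `χ'(G) = Δ+1`, and every
proper subgraph has chromatic index less than `Δ+1`. -/
def IsDeltaCritical {V : Type*} [Fintype V] (G : SimpleGraph V) [DecidableRel G.Adj]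
    (Δ : ℕ) : Prop :=
  G.maxDegree = Δ ∧ chromIndex G = Δ + 1 ∧
    ∀ H : SimpleGraph V, H ≤ G → H ≠ G → chromIndex H < Δ + 1

/-- A Kierstead path `(v₀, v₀v₁, v₁, …, v_{p-1}v_p, v_p)` with respect to the edge
`v₀v₁` and a `k`-coloring `c` of `G - v₀v₁`, encoded by the list `P = [v₀, …, v_p]`. -/
structure IsKiersteadPath {V : Type*} (G : SimpleGraph V) (k : ℕ) (c : Sym2 V → ℕ)
    (P : List V) : Prop where
  two_le : 2 ≤ P.length
  nodup : P.Nodup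
  adj : ∀ (i : ℕ) (h : i + 1 < P.length), G.Adj (P[i]'(by omega)) (P[i+1]'h)
  color : ∀ (i : ℕ) (h : i + 1 < P.length), 1 ≤ i →
      ∃ (j : ℕ) (_ : j ≤ i),
        c (Sym2.mk (P[i]'(by omega)) (P[i+1]'h)) ∈
          missingColors (G.deleteEdges {Sym2.mk (P[0]'(by omega)) (P[1]'(by omega))}) k c
            (P[j]'(by omega))

/-- A multifan centered at `r` with respect to the edge `r s₁` and a `k`-coloring `c` of
`G - r s₁`, encoded by `r` and the list `sl = [s₁, …, s_p]`. -/
structure IsMultifan {V : Type*} (G : SimpleGraph V) (k : ℕ) (c : Sym2 V → ℕ)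
    (r : V) (sl : List V) : Prop where
  one_le : 1 ≤ sl.length
  nodup : (r :: sl).Nodup
  adj : ∀ (i : ℕ) (h : i < sl.length), G.Adj r (sl[i]'h)
  color : ∀ (i : ℕ) (h : i < sl.length), 1 ≤ i →
      ∃ (j : ℕ) (_ : j < i),
        c (Sym2.mk r (sl[i]'h)) ∈
          missingColors (G.deleteEdges {Sym2.mk r (sl[0]'(by omega))}) k c
            (sl[j]'(by omega))

/-- The subgraph of `G` whose edges are the edges colored `α` or `β` by `c`;
its components are the `(α,β)`-chains. -/
def chainGraph {V : Type*} (G : SimpleGraph V) (c : Sym2 V → ℕ) (α β : ℕ) :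
    SimpleGraph V where
  Adj x y := G.Adj x y ∧ (c (Sym2.mk x y) = α ∨ c (Sym2.mk x y) = β)
  symm := by
    constructor
    intro x y hxy
    refine ⟨hxy.1.symm, ?_⟩
    rw [Sym2.eq_swap]
    exact hxy.2
  loopless := ⟨fun x hx => G.loopless.irrefl x hx.1⟩

/-- `x` and `y` are `(α,β)`-linked with respect to the coloring `c` of `G`:
they belong to the same `(α,β)`-chain. -/
def Linked {V : Type*} (G : SimpleGraph V) (c : Sym2 V → ℕ) (α β : ℕ) (x y : V) : Prop :=
  (chainGraph G c α β).Reachable x y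

/-!
Induction on the length of the multifan, simultaneously for all colorings of `G - r s₁`.
Deleting the last vertex `t` leaves a multifan, which is elementary by induction, so only
colors missing at `t` matter.

If `γ` is missing at `r` and at `t`, recolor `r t` with `γ`: its old color becomes missing at
`r` and at the earlier fan vertex witnessing it, contradicting the induction hypothesis (for the
one-vertex fan, the coloring extends to `G`, which is not `k`-edge-colorable).

If `γ` is missing at `t` and at an earlier `s`, pick `β` missing at `r`. Every vertex has at most
two incident `(γ, β)`-edges and `r`, `s`, `t` have at most one, so the three cannot lie in one
`(γ, β)`-chain. If the chain at `s` avoids `r`, swapping it keeps the part of the fan before its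
first edge colored `γ` a multifan; this part contains `s`, which now misses `β` like `r`.
Otherwise the chain at `t` avoids `r` and `s`, and swapping it keeps the whole fan a multifan
with `β` missing at `r` and `t`.
-/

namespace SimpleGraph

variable {V : Type*} {H : SimpleGraph V}

/-- `b` is the vertex the two paths came from, so by `ha` they leave `a` in the same direction. -/
theorem Walk.mem_support_of_length_le
    (hH : ∀ v u, H.Adj v u → (H.neighborSet v \ {u}).Subsingleton) {a b x y : V}
    (p : H.Walk a x) (q : H.Walk a y) (hp : p.IsPath) (hq : q.IsPath)
    (ha : (H.neighborSet a \ {b}).Subsingleton) (hbp : b ∉ p.support.tail)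
    (hbq : b ∉ q.support.tail) (hle : p.length ≤ q.length) : x ∈ q.support := by
  induction p generalizing b y with
  | nil => exact q.start_mem_support
  | @cons a u x hau p ih =>
    cases q with
    | nil => simp at hle
    | @cons _ v _ hav q =>
      rw [Walk.cons_isPath_iff] at hp hq
      simp only [Walk.support_cons, List.tail_cons] at hbp hbq ⊢
      have huv : u = v := ha ⟨hau, fun h => hbp (by rw [← h]; exact p.start_mem_support)⟩
        ⟨hav, fun h => hbq (by rw [← h]; exact q.start_mem_support)⟩
      subst huv
      refine List.mem_cons_of_mem _ (ih q hp.1 hq.1 (hH u a hau.symm)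
        (fun h => hp.2 (List.mem_of_mem_tail h)) (fun h => hq.2 (List.mem_of_mem_tail h)) ?_)
      simpa using hle

theorem Walk.not_subsingleton_of_mem_support {a b w : V} (p : H.Walk a b) (hp : p.IsPath)
    (hw : w ∈ p.support) (hwa : w ≠ a) (hwb : w ≠ b) : ¬ (H.neighborSet w).Subsingleton := by
  induction p with
  | nil => exact absurd (List.mem_singleton.1 hw) hwa
  | @cons a u b hau p ih =>
    rw [Walk.cons_isPath_iff] at hp
    rw [Walk.support_cons, List.mem_cons] at hw
    rcases hw with rfl | hw
    · exact absurd rfl hwa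
    by_cases hwu : w = u
    · subst hwu
      cases p with
      | nil => exact absurd rfl hwb
      | @cons _ z _ hwz p =>
        intro hs
        have haz : a = z := hs hau.symm hwz
        exact hp.2 (by simp [haz])
    · exact ih hp.1 hw hwu hwb

/-- `hH` says that every vertex has at most two neighbours, so components are paths or cycles. -/
theorem Reachable.not_reachable_of_subsingleton
    (hH : ∀ v u, H.Adj v u → (H.neighborSet v \ {u}).Subsingleton) {u v w : V}
    (huv : u ≠ v) (huw : u ≠ w) (hvw : v ≠ w) (hu : (H.neighborSet u).Subsingleton)
    (hv : (H.neighborSet v).Subsingleton) (hw : (H.neighborSet w).Subsingleton)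
    (h : H.Reachable u v) : ¬ H.Reachable u w := by
  intro h'
  obtain ⟨p, hp⟩ := h.exists_isPath
  obtain ⟨q, hq⟩ := h'.exists_isPath
  have hu' : (H.neighborSet u \ {u}).Subsingleton := hu.anti Set.sdiff_subset
  have htail : ∀ {x} (s : H.Walk u x), s.IsPath → u ∉ s.support.tail := fun s hs =>
    (List.nodup_cons.1 (s.cons_tail_support ▸ hs.support_nodup)).1
  rcases le_total p.length q.length with hle | hle
  · exact q.not_subsingleton_of_mem_support hq
      (p.mem_support_of_length_le hH q hp hq hu' (htail p hp) (htail q hq) hle) huv.symm hvw hv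
  · exact p.not_subsingleton_of_mem_support hp
      (q.mem_support_of_length_le hH p hq hp hu' (htail q hq) (htail p hp) hle) huw.symm
      hvw.symm hw

end SimpleGraph

open SimpleGraph Function

section Coloring

variable {V : Type*} {G H K : SimpleGraph V} {k : ℕ} {c c' : Sym2 V → ℕ}

theorem chromIndex_le (hc : IsEdgeColoring G k c) : chromIndex G ≤ k :=
  Nat.sInf_le ⟨c, hc⟩

theorem IsEdgeColoring.eq_of_adj (hc : IsEdgeColoring K k c) {v x y : V} (hx : K.Adj v x)
    (hy : K.Adj v y) (h : c s(v, x) = c s(v, y)) : x = y := by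
  by_contra hxy
  exact hc.2 _ (K.mem_edgeSet.2 hx) _ (K.mem_edgeSet.2 hy)
    (fun he => hxy (Sym2.congr_right.1 he)) ⟨v, Sym2.mem_mk_left v x, Sym2.mem_mk_left v y⟩ h

theorem missingColors_congr {v : V} (h : ∀ e ∈ K.edgeSet, v ∈ e → c' e = c e) :
    missingColors K k c' v = missingColors K k c v := by
  ext δ
  simp only [missingColors, Set.mem_ofPred_eq]
  exact and_congr_right fun _ => and_congr_right fun _ =>
    forall₂_congr fun e he => imp_congr_right fun hv => by rw [h e he hv]

theorem IsEdgeColoring.update [DecidableEq V] {e : Sym2 V} {δ : ℕ} (hHK : H.deleteEdges {e} ≤ K)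
    (hc : IsEdgeColoring K k c) (hδ : ∀ v ∈ e, δ ∈ missingColors K k c v) :
    IsEdgeColoring H k (Function.update c e δ) := by
  have hK : ∀ f ∈ H.edgeSet, f ≠ e → f ∈ K.edgeSet := fun f hf hfe =>
    edgeSet_mono hHK (by simp [edgeSet_deleteEdges, hf, hfe])
  have hδk := hδ _ (Sym2.out_fst_mem e)
  constructor
  · intro f hf
    by_cases hfe : f = e
    · subst hfe
      rw [update_self]
      exact ⟨hδk.1, hδk.2.1⟩
    · rw [update_of_ne hfe]
      exact hc.1 f (hK f hf hfe)
  · rintro f hf g hg hfg ⟨w, hwf, hwg⟩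
    by_cases hfe : f = e <;> by_cases hge : g = e
    · exact absurd (hfe.trans hge.symm) hfg
    · subst hfe
      rw [update_self, update_of_ne hge]
      exact ((hδ w hwf).2.2 g (hK g hg hge) hwg).symm
    · subst hge
      rw [update_self, update_of_ne hfe]
      exact (hδ w hwg).2.2 f (hK f hf hfe) hwf
    · rw [update_of_ne hfe, update_of_ne hge]
      exact hc.2 f (hK f hf hfe) g (hK g hg hge) hfg ⟨w, hwf, hwg⟩

theorem missingColors_update_of_notMem [DecidableEq V] {e : Sym2 V} {δ : ℕ} {v : V}
    (hv : v ∉ e) : missingColors K k (Function.update c e δ) v = missingColors K k c v :=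
  missingColors_congr fun _ _ hvf => update_of_ne (by rintro rfl; exact hv hvf) _ _

theorem IsEdgeColoring.apply_mem_missingColors_update [DecidableEq V]
    (hc : IsEdgeColoring K k c) {e : Sym2 V} (he : e ∈ K.edgeSet) {v : V} (hv : v ∈ e) {δ : ℕ}
    (hδ : δ ∈ missingColors K k c v) : c e ∈ missingColors K k (Function.update c e δ) v := by
  refine ⟨(hc.1 e he).1, (hc.1 e he).2, fun f hf hvf => ?_⟩
  by_cases hfe : f = e
  · subst hfe
    rw [update_self]
    exact (hδ.2.2 f he hv).symm
  · rw [update_of_ne hfe]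
    exact hc.2 f hf e he hfe ⟨v, hvf, hv⟩

theorem exists_mem_missingColors_deleteEdges {r s : V} [Fintype (G.neighborSet r)]
    (hdeg : G.degree r ≤ k) (hadj : G.Adj r s) (c : Sym2 V → ℕ) :
    ∃ β, β ∈ missingColors (G.deleteEdges {s(r, s)}) k c r := by
  classical
  set S := ((G.neighborFinset r).erase s).image fun x => c s(r, x)
  have hS : S.card < (Finset.Icc 1 k).card := by
    have hs : s ∈ G.neighborFinset r := (G.mem_neighborFinset r s).2 hadj
    have hpos : 0 < G.degree r := (G.degree_pos_iff_exists_adj r).2 ⟨s, hadj⟩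
    calc S.card ≤ ((G.neighborFinset r).erase s).card := Finset.card_image_le
      _ = G.degree r - 1 := by rw [Finset.card_erase_of_mem hs, card_neighborFinset_eq_degree]
      _ < (Finset.Icc 1 k).card := by rw [Nat.card_Icc]; omega
  obtain ⟨β, hβ, hβS⟩ := Finset.exists_mem_notMem_of_card_lt_card hS
  rw [Finset.mem_Icc] at hβ
  refine ⟨β, hβ.1, hβ.2, fun e he hre hβe => hβS ?_⟩
  obtain ⟨x, rfl⟩ := Sym2.mem_iff_exists.1 hre
  rw [edgeSet_deleteEdges] at he
  have hxs : x ≠ s := by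
    rintro rfl
    exact he.2 rfl
  exact Finset.mem_image.2 ⟨x, Finset.mem_erase.2 ⟨hxs, (G.mem_neighborFinset r x).2 he.1⟩, hβe⟩

theorem IsEdgeColoring.disjoint_missingColors_of_not_colorable {u v : V}
    (hnc : ∀ c, ¬ IsEdgeColoring G k c) (hc : IsEdgeColoring (G.deleteEdges {s(u, v)}) k c) :
    Disjoint (missingColors (G.deleteEdges {s(u, v)}) k c u)
      (missingColors (G.deleteEdges {s(u, v)}) k c v) := by
  classical
  refine Set.disjoint_left.2 fun δ hu hv => hnc _ (hc.update (δ := δ) le_rfl fun w hw => ?_)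
  rcases Sym2.mem_iff.1 hw with rfl | rfl
  exacts [hu, hv]

end Coloring

section Kempe

variable {V : Type*} {K : SimpleGraph V} {k : ℕ} {c : Sym2 V → ℕ} {α β δ : ℕ} {x v : V}
  {e : Sym2 V}

noncomputable def kempeChange (K : SimpleGraph V) (c : Sym2 V → ℕ) (α β : ℕ) (x : V) :
    Sym2 V → ℕ :=
  open Classical in
  fun e => if ∃ v ∈ e, Linked K c α β x v then Equiv.swap α β (c e) else c e

theorem Linked.of_mem_edge {w : V} (he : e ∈ K.edgeSet) (hce : c e = α ∨ c e = β) (hv : v ∈ e)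
    (hw : w ∈ e) (h : Linked K c α β x w) : Linked K c α β x v := by
  by_cases hwv : w = v
  · exact hwv ▸ h
  obtain rfl := (Sym2.mem_and_mem_iff hwv).1 ⟨hw, hv⟩
  exact h.trans (Adj.reachable ⟨K.mem_edgeSet.1 he, hce⟩)

theorem kempeChange_of_linked (hv : v ∈ e) (hxv : Linked K c α β x v) :
    kempeChange K c α β x e = Equiv.swap α β (c e) :=
  if_pos ⟨v, hv, hxv⟩

theorem kempeChange_of_not_linked (he : e ∈ K.edgeSet) (hv : v ∈ e)
    (hxv : ¬ Linked K c α β x v) : kempeChange K c α β x e = c e := by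
  unfold kempeChange
  split_ifs with h
  · obtain ⟨w, hw, hxw⟩ := h
    have hce : ¬ (c e = α ∨ c e = β) := fun hce => hxv (hxw.of_mem_edge he hce hv hw)
    exact Equiv.swap_apply_of_ne_of_ne (not_or.1 hce).1 (not_or.1 hce).2
  · rfl

theorem kempeChange_eq_iff (hδα : δ ≠ α) (hδβ : δ ≠ β) :
    kempeChange K c α β x e = δ ↔ c e = δ := by
  unfold kempeChange
  split_ifs
  · rw [Equiv.swap_apply_eq_iff, Equiv.swap_apply_of_ne_of_ne hδα hδβ]
  · rfl

theorem IsEdgeColoring.kempeChange (hc : IsEdgeColoring K k c) (hα : 1 ≤ α ∧ α ≤ k)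
    (hβ : 1 ≤ β ∧ β ≤ k) : IsEdgeColoring K k (kempeChange K c α β x) := by
  constructor
  · intro e he
    unfold _root_.kempeChange
    split_ifs
    · rw [Equiv.swap_apply_def]
      split_ifs
      exacts [hβ, hα, hc.1 e he]
    · exact hc.1 e he
  · rintro e he f hf hef ⟨v, hve, hvf⟩
    have hcef := hc.2 e he f hf hef ⟨v, hve, hvf⟩
    by_cases hxv : Linked K c α β x v
    · rw [kempeChange_of_linked hve hxv, kempeChange_of_linked hvf hxv]
      exact (Equiv.swap α β).injective.ne hcef
    · rwa [kempeChange_of_not_linked he hve hxv, kempeChange_of_not_linked hf hvf hxv]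

theorem missingColors_kempeChange_of_not_linked (hxv : ¬ Linked K c α β x v) :
    missingColors K k (kempeChange K c α β x) v = missingColors K k c v :=
  missingColors_congr fun _ he hv => kempeChange_of_not_linked he hv hxv

theorem mem_missingColors_kempeChange_iff (hδα : δ ≠ α) (hδβ : δ ≠ β) :
    δ ∈ missingColors K k (kempeChange K c α β x) v ↔ δ ∈ missingColors K k c v := by
  simp only [missingColors, Set.mem_ofPred_eq, ne_eq, kempeChange_eq_iff hδα hδβ]

theorem mem_missingColors_kempeChange_of_linked (hxv : Linked K c α β x v)
    (hα : α ∈ missingColors K k c v) (hβ : 1 ≤ β ∧ β ≤ k) :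
    β ∈ missingColors K k (kempeChange K c α β x) v := by
  refine ⟨hβ.1, hβ.2, fun e he hve h => hα.2.2 e he hve ?_⟩
  rwa [kempeChange_of_linked hve hxv, Equiv.swap_apply_eq_iff, Equiv.swap_apply_right] at h

theorem IsEdgeColoring.chainGraph_neighborSet_diff_subsingleton (hc : IsEdgeColoring K k c)
    {u : V} (hvu : (chainGraph K c α β).Adj v u) :
    ((chainGraph K c α β).neighborSet v \ {u}).Subsingleton := by
  rintro y ⟨hy, hyu⟩ z ⟨hz, hzu⟩
  have hne : ∀ {w}, (chainGraph K c α β).Adj v w → w ≠ u → c s(v, w) ≠ c s(v, u) :=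
    fun hw hwu h => hwu (hc.eq_of_adj hw.1 hvu.1 h)
  refine hc.eq_of_adj hy.1 hz.1 ?_
  have := hne hy hyu
  have := hne hz hzu
  have := hy.2
  have := hz.2
  have := hvu.2
  omega

theorem IsEdgeColoring.chainGraph_neighborSet_subsingleton (hc : IsEdgeColoring K k c)
    (hv : α ∈ missingColors K k c v ∨ β ∈ missingColors K k c v) :
    ((chainGraph K c α β).neighborSet v).Subsingleton := by
  intro y hy z hz
  refine hc.eq_of_adj hy.1 hz.1 ?_
  have := hy.2
  have := hz.2
  rcases hv with hv | hv <;>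
  · have := hv.2.2 _ (K.mem_edgeSet.2 hy.1) (Sym2.mem_mk_left v y)
    have := hv.2.2 _ (K.mem_edgeSet.2 hz.1) (Sym2.mem_mk_left v z)
    omega

theorem IsEdgeColoring.not_linked_of_linked (hc : IsEdgeColoring K k c) {u w : V}
    (huv : u ≠ v) (huw : u ≠ w) (hvw : v ≠ w)
    (hu : α ∈ missingColors K k c u ∨ β ∈ missingColors K k c u)
    (hv : α ∈ missingColors K k c v ∨ β ∈ missingColors K k c v)
    (hw : α ∈ missingColors K k c w ∨ β ∈ missingColors K k c w)
    (h : Linked K c α β u v) : ¬ Linked K c α β u w :=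
  Reachable.not_reachable_of_subsingleton (fun _ _ => hc.chainGraph_neighborSet_diff_subsingleton)
    huv huw hvw (hc.chainGraph_neighborSet_subsingleton hu)
    (hc.chainGraph_neighborSet_subsingleton hv) (hc.chainGraph_neighborSet_subsingleton hw) h

end Kempe

section Multifan

variable {V : Type*} {G : SimpleGraph V} {k : ℕ} {c c' : Sym2 V → ℕ} {r s₁ : V}
  {rest : List V}

theorem isMultifan_cons_iff :
    IsMultifan G k c r (s₁ :: rest) ↔ (r :: s₁ :: rest).Nodup ∧ (∀ x ∈ s₁ :: rest, G.Adj r x) ∧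
      ∀ a x b, rest = a ++ x :: b →
        ∃ y ∈ s₁ :: a, c s(r, x) ∈ missingColors (G.deleteEdges {s(r, s₁)}) k c y := by
  constructor
  · intro hF
    refine ⟨hF.nodup, fun x hx => ?_, fun a x b hrest => ?_⟩
    · obtain ⟨i, hi, rfl⟩ := List.getElem_of_mem hx
      exact hF.adj i hi
    · subst hrest
      obtain ⟨j, hj, hy⟩ := hF.color (a.length + 1) (by simp) (by omega)
      refine ⟨_, ?_, by simpa using hy⟩
      cases j with
      | zero => exact List.mem_cons_self
      | succ j =>
        simp only [List.getElem_cons_succ, List.getElem_append_left (show j < a.length by omega)]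
        exact List.mem_cons_of_mem _ (List.getElem_mem _)
  · rintro ⟨hnd, hadj, hcol⟩
    refine ⟨by simp, hnd, fun i hi => hadj _ (List.getElem_mem hi), fun i hi hi1 => ?_⟩
    obtain ⟨i, rfl⟩ : ∃ i', i = i' + 1 := ⟨i - 1, by omega⟩
    have hi' : i < rest.length := by simpa using hi
    obtain ⟨y, hy, hmem⟩ := hcol (rest.take i) rest[i] (rest.drop (i+1)) (by simp)
    obtain ⟨j, hj, rfl⟩ := List.getElem_of_mem hy
    refine ⟨j, by simp at hj; omega, ?_⟩
    cases j <;> simpa using hmem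

theorem IsMultifan.of_prefix {a : List V} (hF : IsMultifan G k c r (s₁ :: rest))
    (ha : a <+: rest) :
    IsMultifan G k c r (s₁ :: a) := by
  obtain ⟨b, rfl⟩ := ha
  obtain ⟨hnd, hadj, hcol⟩ := isMultifan_cons_iff.1 hF
  refine isMultifan_cons_iff.2 ⟨hnd.sublist ?_, fun x hx => hadj x ?_,
    fun a' x b' h => hcol a' x (b' ++ b) (by simp [h])⟩
  · exact ((List.sublist_append_left a b).cons_cons s₁).cons_cons r
  · simp only [List.mem_cons, List.mem_append] at hx ⊢
    tauto

theorem IsMultifan.congr (hF : IsMultifan G k c r (s₁ :: rest))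
    (hedge : ∀ x ∈ rest, c' s(r, x) = c s(r, x))
    (hmiss : ∀ a x b, rest = a ++ x :: b → ∀ y ∈ s₁ :: a,
      c s(r, x) ∈ missingColors (G.deleteEdges {s(r, s₁)}) k c y →
        c s(r, x) ∈ missingColors (G.deleteEdges {s(r, s₁)}) k c' y) :
    IsMultifan G k c' r (s₁ :: rest) := by
  obtain ⟨hnd, hadj, hcol⟩ := isMultifan_cons_iff.1 hF
  refine isMultifan_cons_iff.2 ⟨hnd, hadj, fun a x b h => ?_⟩
  obtain ⟨y, hy, hm⟩ := hcol a x b h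
  exact ⟨y, hy, hedge x (by simp [h]) ▸ hmiss a x b h y hy hm⟩

theorem IsMultifan.center_notMem (hF : IsMultifan G k c r (s₁ :: rest)) : r ∉ s₁ :: rest :=
  (List.nodup_cons.1 hF.nodup).1

theorem IsMultifan.last_notMem {t : V} (hF : IsMultifan G k c r (s₁ :: (rest ++ [t]))) :
    t ∉ r :: s₁ :: rest := by
  have hnd := hF.nodup
  rw [← List.cons_append, ← List.cons_append, List.nodup_append] at hnd
  exact fun ht => hnd.2.2 t ht t (List.mem_singleton_self t) rfl

theorem IsMultifan.mem_edgeSet {x : V} (hF : IsMultifan G k c r (s₁ :: rest)) (hx : x ∈ rest) :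
    s(r, x) ∈ (G.deleteEdges {s(r, s₁)}).edgeSet := by
  obtain ⟨hnd, hadj, -⟩ := isMultifan_cons_iff.1 hF
  have hxs : x ≠ s₁ := by
    rintro rfl
    exact (List.nodup_cons.1 (List.nodup_cons.1 hnd).2).1 hx
  rw [edgeSet_deleteEdges]
  exact ⟨hadj x (List.mem_cons_of_mem _ hx), fun h => hxs (Sym2.congr_right.1 h)⟩

end Multifan

section Elementary

variable {V : Type*} {G K : SimpleGraph V} {k : ℕ} {c : Sym2 V → ℕ} {r s₁ : V} {rest : List V}

def IsElementary (K : SimpleGraph V) (k : ℕ) (c : Sym2 V → ℕ) (X : Set V) : Prop :=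
  X.Pairwise (Disjoint on missingColors K k c)

theorem IsElementary.eq_of_mem {X : Set V} {u v : V} {δ : ℕ} (hX : IsElementary K k c X)
    (hu : u ∈ X) (hv : v ∈ X) (hδu : δ ∈ missingColors K k c u)
    (hδv : δ ∈ missingColors K k c v) : u = v := by
  by_contra huv
  exact Set.disjoint_left.1 (hX hu hv huv) hδu hδv

variable (G k r s₁) in
def ElementaryMultifans (rest : List V) : Prop :=
  ∀ c, IsEdgeColoring (G.deleteEdges {s(r, s₁)}) k c → IsMultifan G k c r (s₁ :: rest) →
    IsElementary (G.deleteEdges {s(r, s₁)}) k c {x | x ∈ r :: s₁ :: rest}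

/-- The first fan edge colored `γ` needs `s` as its witness, so `s` comes before it. -/
theorem IsMultifan.exists_prefix_without_color {s : V} {γ : ℕ}
    (hF : IsMultifan G k c r (s₁ :: rest))
    (hE : IsElementary (G.deleteEdges {s(r, s₁)}) k c {x | x ∈ r :: s₁ :: rest})
    (hs : s ∈ s₁ :: rest) (hγ : γ ∈ missingColors (G.deleteEdges {s(r, s₁)}) k c s) :
    ∃ a, a <+: rest ∧ s ∈ s₁ :: a ∧ ∀ x ∈ a, c s(r, x) ≠ γ := by
  let p : V → Bool := fun x => c s(r, x) ≠ γ
  refine ⟨rest.takeWhile p, List.takeWhile_prefix p, ?_,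
    fun x hx => by simpa [p] using List.mem_takeWhile_imp hx⟩
  rcases hd : rest.dropWhile p with _ | ⟨x, b⟩
  · rwa [← List.append_nil (rest.takeWhile p), ← hd, List.takeWhile_append_dropWhile]
  · have hsplit : rest = rest.takeWhile p ++ x :: b := by
      rw [← hd, List.takeWhile_append_dropWhile]
    have hx : c s(r, x) = γ := by
      have := List.head?_dropWhile_not p rest
      rw [hd] at this
      simpa [p] using this
    obtain ⟨y, hy, hγy⟩ := (isMultifan_cons_iff.1 hF).2.2 _ x b hsplit
    rw [hx] at hγy
    have hys : y = s := hE.eq_of_mem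
      (List.mem_cons_of_mem _ (((List.takeWhile_prefix p).sublist.cons_cons s₁).subset hy))
      (List.mem_cons_of_mem _ hs) hγy hγ
    exact hys ▸ hy

theorem ElementaryMultifans.disjoint_center_last {t : V}
    (hIH : ElementaryMultifans G k r s₁ rest)
    (hc : IsEdgeColoring (G.deleteEdges {s(r, s₁)}) k c)
    (hF : IsMultifan G k c r (s₁ :: (rest ++ [t]))) :
    Disjoint (missingColors (G.deleteEdges {s(r, s₁)}) k c r)
      (missingColors (G.deleteEdges {s(r, s₁)}) k c t) := by
  classical
  refine Set.disjoint_left.2 fun γ hγr hγt => ?_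
  obtain ⟨y, hy, hy_miss⟩ := (isMultifan_cons_iff.1 hF).2.2 rest t [] rfl
  have hrt : s(r, t) ∈ (G.deleteEdges {s(r, s₁)}).edgeSet := hF.mem_edgeSet (by simp)
  have hc' : IsEdgeColoring (G.deleteEdges {s(r, s₁)}) k (Function.update c s(r, t) γ) :=
    hc.update (deleteEdges_le _) fun v hv => by
      rcases Sym2.mem_iff.1 hv with rfl | rfl
      exacts [hγr, hγt]
  have hoff : ∀ v ∈ s₁ :: rest, v ∉ s(r, t) := by
    intro v hv hvrt
    rcases Sym2.mem_iff.1 hvrt with rfl | rfl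
    · exact hF.center_notMem (((List.prefix_append rest [t]).sublist.cons_cons s₁).subset hv)
    · exact hF.last_notMem (List.mem_cons_of_mem _ hv)
  have hP : IsMultifan G k (Function.update c s(r, t) γ) r (s₁ :: rest) := by
    refine (hF.of_prefix (List.prefix_append _ _)).congr
      (fun x hx => update_of_ne (fun h => hoff x (List.mem_cons_of_mem _ hx) ?_) _ _)
      (fun a x b h v hv hm => ?_)
    · exact h ▸ Sym2.mem_mk_right r x
    · rwa [missingColors_update_of_notMem (hoff v ?_)]
      subst h
      exact ((List.prefix_append a (x :: b)).sublist.cons_cons s₁).subset hv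
  rw [← missingColors_update_of_notMem (hoff y hy)] at hy_miss
  have hry := (hIH _ hc' hP).eq_of_mem List.mem_cons_self (List.mem_cons_of_mem _ hy)
    (hc.apply_mem_missingColors_update hrt (Sym2.mem_mk_left r t) hγr) hy_miss
  exact hoff y hy (hry ▸ Sym2.mem_mk_left r t)

theorem IsMultifan.linked_of_mem_missingColors {s : V} {β γ : ℕ}
    (hIH : ∀ a, a <+: rest → ElementaryMultifans G k r s₁ a)
    (hc : IsEdgeColoring (G.deleteEdges {s(r, s₁)}) k c) (hF : IsMultifan G k c r (s₁ :: rest))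
    (hs : s ∈ s₁ :: rest) (hγ : γ ∈ missingColors (G.deleteEdges {s(r, s₁)}) k c s)
    (hβ : β ∈ missingColors (G.deleteEdges {s(r, s₁)}) k c r) :
    Linked (G.deleteEdges {s(r, s₁)}) c γ β s r := by
  set K := G.deleteEdges {s(r, s₁)}
  by_contra hsr
  obtain ⟨a, ha, hsa, hγa⟩ := hF.exists_prefix_without_color (hIH rest (List.prefix_refl _) c hc hF)
    hs hγ
  have hQ := hF.of_prefix ha
  have hQψ : IsMultifan G k (kempeChange K c γ β s) r (s₁ :: a) := by
    refine hQ.congr (fun x hx => kempeChange_of_not_linked (hQ.mem_edgeSet hx)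
      (Sym2.mem_mk_left _ _) hsr) (fun a' x b h y _ hm => ?_)
    have hx : x ∈ a := by simp [h]
    exact (mem_missingColors_kempeChange_iff (hγa x hx)
      (hβ.2.2 _ (hQ.mem_edgeSet hx) (Sym2.mem_mk_left _ _))).2 hm
  have hrs := (hIH a ha _ (hc.kempeChange ⟨hγ.1, hγ.2.1⟩ ⟨hβ.1, hβ.2.1⟩) hQψ).eq_of_mem
    List.mem_cons_self (List.mem_cons_of_mem _ hsa)
    (by rwa [missingColors_kempeChange_of_not_linked hsr])
    (mem_missingColors_kempeChange_of_linked (Reachable.refl _) hγ ⟨hβ.1, hβ.2.1⟩)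
  exact hF.center_notMem (hrs ▸ hs)

theorem IsMultifan.linked_last {s t : V} {β γ : ℕ}
    (hIH : ElementaryMultifans G k r s₁ rest)
    (hc : IsEdgeColoring (G.deleteEdges {s(r, s₁)}) k c)
    (hF : IsMultifan G k c r (s₁ :: (rest ++ [t]))) (hs : s ∈ s₁ :: rest)
    (hγs : γ ∈ missingColors (G.deleteEdges {s(r, s₁)}) k c s)
    (hγt : γ ∈ missingColors (G.deleteEdges {s(r, s₁)}) k c t)
    (hβ : β ∈ missingColors (G.deleteEdges {s(r, s₁)}) k c r) :
    Linked (G.deleteEdges {s(r, s₁)}) c γ β t r ∨ Linked (G.deleteEdges {s(r, s₁)}) c γ β t s := by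
  set K := G.deleteEdges {s(r, s₁)}
  by_contra h
  obtain ⟨htr, hts⟩ := not_or.1 h
  have hE := hIH c hc (hF.of_prefix (List.prefix_append rest [t]))
  have hFψ : IsMultifan G k (kempeChange K c γ β t) r (s₁ :: (rest ++ [t])) := by
    refine hF.congr (fun x hx => kempeChange_of_not_linked (hF.mem_edgeSet hx)
      (Sym2.mem_mk_left _ _) htr) (fun a x b h y hy hm => ?_)
    by_cases hxγ : c s(r, x) = γ
    · have ha : a <+: rest := by
        rcases List.prefix_concat_iff.1 ⟨x :: b, h.symm⟩ with rfl | ha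
        · simp at h
        · exact ha
      have hys : y = s := hE.eq_of_mem
        (List.mem_cons_of_mem _ ((ha.sublist.cons_cons s₁).subset hy))
        (List.mem_cons_of_mem _ hs) (hxγ ▸ hm) hγs
      rwa [hys, missingColors_kempeChange_of_not_linked hts, ← hys]
    · exact (mem_missingColors_kempeChange_iff hxγ
        (hβ.2.2 _ (hF.mem_edgeSet (by simp [h])) (Sym2.mem_mk_left _ _))).2 hm
  exact Set.disjoint_left.1 (hIH.disjoint_center_last
    (hc.kempeChange ⟨hγs.1, hγs.2.1⟩ ⟨hβ.1, hβ.2.1⟩) hFψ)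
    (by rwa [missingColors_kempeChange_of_not_linked htr])
    (mem_missingColors_kempeChange_of_linked (Reachable.refl _) hγt ⟨hβ.1, hβ.2.1⟩)

theorem disjoint_missingColors_last [Fintype (G.neighborSet r)] {s t : V}
    (hdeg : G.degree r ≤ k) (hIH : ∀ a, a <+: rest → ElementaryMultifans G k r s₁ a)
    (hc : IsEdgeColoring (G.deleteEdges {s(r, s₁)}) k c)
    (hF : IsMultifan G k c r (s₁ :: (rest ++ [t]))) (hs : s ∈ s₁ :: rest) :
    Disjoint (missingColors (G.deleteEdges {s(r, s₁)}) k c s)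
      (missingColors (G.deleteEdges {s(r, s₁)}) k c t) := by
  refine Set.disjoint_left.2 fun γ hγs hγt => ?_
  obtain ⟨β, hβ⟩ := exists_mem_missingColors_deleteEdges hdeg (hF.adj 0 (by simp)) c
  have hP := hF.of_prefix (List.prefix_append rest [t])
  have hsr := hP.linked_of_mem_missingColors hIH hc hs hγs hβ
  have htr := (hF.linked_last (hIH rest (List.prefix_refl _)) hc hs hγs hγt hβ).elim id
    fun hts => hts.trans hsr
  have hrs : r ≠ s := fun h => hP.center_notMem (h ▸ hs)
  have hrt : r ≠ t := fun h => hF.last_notMem (h ▸ List.mem_cons_self)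
  have hst : s ≠ t := fun h => hF.last_notMem (h ▸ List.mem_cons_of_mem _ hs)
  exact hc.not_linked_of_linked hrs hrt hst (Or.inr hβ) (Or.inl hγs) (Or.inl hγt) hsr.symm
    htr.symm

theorem elementaryMultifans [Fintype (G.neighborSet r)]
    (hnc : ∀ c, ¬ IsEdgeColoring G k c) (hdeg : G.degree r ≤ k) (rest : List V) :
    ElementaryMultifans G k r s₁ rest := by
  induction hn : rest.length using Nat.strong_induction_on generalizing rest with
  | _ n ih =>
  intro c hc hF
  rcases rest.eq_nil_or_concat' with rfl | ⟨rest, t, rfl⟩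
  · have hpair : {x | x ∈ [r, s₁]} = {r, s₁} := by
      ext
      simp
    rw [IsElementary, hpair]
    have := hc.disjoint_missingColors_of_not_colorable hnc
    exact Set.pairwise_pair.2 fun _ => ⟨this, this.symm⟩
  · have hIH : ∀ a, a <+: rest → ElementaryMultifans G k r s₁ a := fun a ha =>
      ih a.length (by have := ha.length_le; simp at hn; omega) a rfl
    have hset : {x | x ∈ r :: s₁ :: (rest ++ [t])} = insert t {x | x ∈ r :: s₁ :: rest} := by
      ext
      simp only [List.mem_cons, List.mem_append, Set.mem_ofPred_eq, Set.mem_insert_iff]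
      tauto
    rw [IsElementary, hset]
    refine Set.pairwise_insert.2 ⟨hIH rest (List.prefix_refl _) c hc
      (hF.of_prefix (List.prefix_append _ _)), fun y hy _ => ?_⟩
    have hyt : Disjoint (missingColors (G.deleteEdges {s(r, s₁)}) k c y)
        (missingColors (G.deleteEdges {s(r, s₁)}) k c t) := by
      rcases List.mem_cons.1 hy with rfl | hy
      · exact (hIH rest (List.prefix_refl _)).disjoint_center_last hc hF
      · exact disjoint_missingColors_last hdeg hIH hc hF hy
    exact ⟨hyt.symm, hyt⟩

end Elementary

theorem multifan_elementary_general
    {V : Type*} [Fintype V]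
    (Δ : ℕ) (G : SimpleGraph V) [DecidableRel G.Adj]
    (hΔ : G.maxDegree = Δ) (hclass2 : chromIndex G = Δ + 1)
    (r s₁ : V) (rest : List V)
    (φ : Sym2 V → ℕ)
    (hφ : IsEdgeColoring (G.deleteEdges {Sym2.mk r s₁}) Δ φ)
    (hF : IsMultifan G Δ φ r (s₁ :: rest)) :
    ∀ x ∈ (r :: s₁ :: rest : List V), ∀ y ∈ (r :: s₁ :: rest : List V), x ≠ y →
      missingColors (G.deleteEdges {Sym2.mk r s₁}) Δ φ x ∩
        missingColors (G.deleteEdges {Sym2.mk r s₁}) Δ φ y = ∅ := by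
  have hnc : ∀ c, ¬ IsEdgeColoring G Δ c := fun c hc => by
    have := chromIndex_le hc
    omega
  have hE := elementaryMultifans hnc (hΔ ▸ G.degree_le_maxDegree r) rest φ hφ hF
  exact fun x hx y hy hxy => Set.disjoint_iff_inter_eq_empty.1 (hE hx hy hxy)

/-- Let `G` be a Class 2 graph with maximum degree `Δ` and let
`F = F_φ(r, s₁ : s_p)` be a multifan with respect to a critical edge `e = r s₁` and a
coloring `φ ∈ C^Δ(G - e)`. Then `V(F)` is `φ`-elementary: the missing color sets of
distinct vertices of `F` are disjoint. -/
theorem multifan_elementary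
    {V : Type*} [Fintype V] [DecidableEq V]
    (Δ : ℕ) (G : SimpleGraph V) [DecidableRel G.Adj]
    (hΔ : G.maxDegree = Δ) (hclass2 : chromIndex G = Δ + 1)
    (r s₁ : V) (rest : List V)
    (hcrit : IsCriticalEdge G (Sym2.mk r s₁))
    (φ : Sym2 V → ℕ)
    (hφ : IsEdgeColoring (G.deleteEdges {Sym2.mk r s₁}) Δ φ)
    (hF : IsMultifan G Δ φ r (s₁ :: rest)) :
    ∀ x ∈ (r :: s₁ :: rest : List V), ∀ y ∈ (r :: s₁ :: rest : List V), x ≠ y →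
      missingColors (G.deleteEdges {Sym2.mk r s₁}) Δ φ x ∩
        missingColors (G.deleteEdges {Sym2.mk r s₁}) Δ φ y = ∅ :=
  multifan_elementary_general Δ G hΔ hclass2 r s₁ rest φ hφ hF
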